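/- arXiv:0901.4506 — 2 statements merged into one kernel-verified Lean document; each statement's English description precedes it below -/
import Mathlib

section
/- Let ρ_{RA} = ∑_i p_i ρ_R^i ⊗ |i⟩⟨i|_A be a classically correlated state on H_R⊗H_A, where {|i⟩}_{i=1}^d is an orthonormal basis of H_A ≅ C^d, p is a probability distribution, and each ρ_R^i is a state on H_R. Let {|e^i⟩}_{i=1}^d be an orthonormal basis of C^d that is mutually unbiased with respect to {|i⟩}, i.e. |⟨e^i|j⟩|² = 1/d for all i,j, and define the isometry M_A := ∑_i |e_B^i⟩⟨e_A^i| ⊗ |e_E^i⟩ from H_A to H_B⊗H_E with H_B ≅ H_E ≅ C^d. Then the output state ς_{RBE} := (1_R⊗M_A) ρ_{RA} (1_R⊗M_A†) satisfies ς_{RB} = ρ_R ⊗ (1_B/d) and ς_{RE} = ρ_R ⊗ (1_E/d), where ρ_R := ∑_i p_i ρ_R^i. In particular I^{R:B}(ς_{RBE}) = I^{R:E}(ς_{RBE}) = 0, so the correlations of a classically correlated state can be perfectly eliminated. -/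
open Matrix BigOperators
open scoped Kronecker ComplexOrder

noncomputable section

variable {α β γ : Type*}

/-- Partial trace over the second tensor factor. -/
def ptrace2 [Fintype β] (ρ : Matrix (α × β) (α × β) ℂ) : Matrix α α ℂ :=
  Matrix.of fun i j => ∑ k, ρ (i, k) (j, k)

/-- Partial trace over the first tensor factor. -/
def ptrace1 [Fintype α] (ρ : Matrix (α × β) (α × β) ℂ) : Matrix β β ℂ :=
  Matrix.of fun i j => ∑ k, ρ (k, i) (k, j)

open scoped Classical in
/-- von Neumann entropy, in bits (base-2 logarithm), via the eigenvalues of a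
Hermitian matrix (with the convention `0 * log 0 = 0`). -/
def vnEntropy [Fintype α] [DecidableEq α] (ρ : Matrix α α ℂ) : ℝ :=
  if h : ρ.IsHermitian then -∑ i, (h.eigenvalues i) * Real.logb 2 (h.eigenvalues i) else 0

/-- Quantum mutual information `I^{X:Y} = S(X) + S(Y) - S(XY)` of a bipartite state. -/
def mutInfo [Fintype α] [DecidableEq α] [Fintype β] [DecidableEq β]
    (ρ : Matrix (α × β) (α × β) ℂ) : ℝ :=
  vnEntropy (ptrace2 ρ) + vnEntropy (ptrace1 ρ) - vnEntropy ρ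

/-- Coherent information `I_c^{A→R} = S(R) - S(RA)` of a bipartite state on `R × A`. -/
def cohInfo [Fintype α] [DecidableEq α] [Fintype β] [DecidableEq β]
    (ρ : Matrix (α × β) (α × β) ℂ) : ℝ :=
  vnEntropy (ptrace2 ρ) - vnEntropy ρ

/-- Marginal on `R, B` of a tripartite state on `R × (B × E)`. -/
def mRB [Fintype γ] (ς : Matrix (α × (β × γ)) (α × (β × γ)) ℂ) : Matrix (α × β) (α × β) ℂ :=
  Matrix.of fun x y => ∑ m, ς (x.1, (x.2, m)) (y.1, (y.2, m))

/-- Marginal on `R, E` of a tripartite state on `R × (B × E)`. -/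
def mRE [Fintype β] (ς : Matrix (α × (β × γ)) (α × (β × γ)) ℂ) : Matrix (α × γ) (α × γ) ℂ :=
  Matrix.of fun x y => ∑ m, ς (x.1, (m, x.2)) (y.1, (m, y.2))

/-- A state is a positive semidefinite matrix of unit trace. -/
def IsState [Fintype α] (ρ : Matrix α α ℂ) : Prop := ρ.PosSemidef ∧ ρ.trace = 1

/-- The ε-ineliminable correlations `Ξ_A(ρ_{RA}; ε)`: the least value of `I^{R:B}` of the
output state `ς_{RBE} = (1⊗V) ρ (1⊗V)†`, over all isometries `V : H_A → H_B ⊗ H_E`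
(into arbitrary finite-dimensional spaces) satisfying `I^{R:E}(ς) ≤ ε` and
`I^{R:E}(ς) ≤ I^{R:B}(ς)`. -/
def Xi {dR dA : Type*} [Fintype dR] [DecidableEq dR] [Fintype dA] [DecidableEq dA]
    (ρ : Matrix (dR × dA) (dR × dA) ℂ) (ε : ℝ) : ℝ :=
  sInf { x : ℝ | ∃ (b e : ℕ) (V : Matrix (Fin b × Fin e) dA ℂ), Vᴴ * V = 1 ∧
    mutInfo (mRE (((1 : Matrix dR dR ℂ) ⊗ₖ V) * ρ * ((1 : Matrix dR dR ℂ) ⊗ₖ V)ᴴ)) ≤ ε ∧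
    mutInfo (mRE (((1 : Matrix dR dR ℂ) ⊗ₖ V) * ρ * ((1 : Matrix dR dR ℂ) ⊗ₖ V)ᴴ)) ≤
      mutInfo (mRB (((1 : Matrix dR dR ℂ) ⊗ₖ V) * ρ * ((1 : Matrix dR dR ℂ) ⊗ₖ V)ᴴ)) ∧
    x = mutInfo (mRB (((1 : Matrix dR dR ℂ) ⊗ₖ V) * ρ * ((1 : Matrix dR dR ℂ) ⊗ₖ V)ᴴ)) }

/-- The advantage-preserving ineliminable correlations `Ξ_A(ρ_{RA})` (privacy
parameter `ε = ∞`): only the constraint `I^{R:E}(ς) ≤ I^{R:B}(ς)` is imposed. -/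
def XiAP {dR dA : Type*} [Fintype dR] [DecidableEq dR] [Fintype dA] [DecidableEq dA]
    (ρ : Matrix (dR × dA) (dR × dA) ℂ) : ℝ :=
  sInf { x : ℝ | ∃ (b e : ℕ) (V : Matrix (Fin b × Fin e) dA ℂ), Vᴴ * V = 1 ∧
    mutInfo (mRE (((1 : Matrix dR dR ℂ) ⊗ₖ V) * ρ * ((1 : Matrix dR dR ℂ) ⊗ₖ V)ᴴ)) ≤
      mutInfo (mRB (((1 : Matrix dR dR ℂ) ⊗ₖ V) * ρ * ((1 : Matrix dR dR ℂ) ⊗ₖ V)ᴴ)) ∧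
    x = mutInfo (mRB (((1 : Matrix dR dR ℂ) ⊗ₖ V) * ρ * ((1 : Matrix dR dR ℂ) ⊗ₖ V)ᴴ)) }

end

/-!
The isometry `M_A` sends `|fⁱ⟩` to `∑ⱼ ⟨eʲ|fⁱ⟩ |eʲ⟩_B |eʲ⟩_E`, a vector whose two legs are
perfectly correlated in the basis `{eʲ}`. Tracing out either leg therefore kills all
off-diagonal terms and leaves `∑ⱼ |⟨eʲ|fⁱ⟩|² |eʲ⟩⟨eʲ| = 1/d`, by mutual unbiasedness. Hence each
branch of `ρ_{RA}` contributes `ρ_R^i ⊗ 1/d` to both `ς_{RB}` and `ς_{RE}`, and these product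
states have zero mutual information because the entropy is additive on tensor products.
-/

open Polynomial Real

lemma Finset.sum_sum_sum_reverse {α β γ M : Type*} [AddCommMonoid M] (s : Finset α)
    (t : Finset β) (u : Finset γ) (f : α → β → γ → M) :
    ∑ a ∈ s, ∑ b ∈ t, ∑ c ∈ u, f a b c = ∑ c ∈ u, ∑ b ∈ t, ∑ a ∈ s, f a b c :=
  calc _ = ∑ b ∈ t, ∑ a ∈ s, ∑ c ∈ u, f a b c := Finset.sum_comm
    _ = ∑ b ∈ t, ∑ c ∈ u, ∑ a ∈ s, f a b c := Finset.sum_congr rfl fun _ _ => Finset.sum_comm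
    _ = _ := Finset.sum_comm

lemma ptrace2_kronecker {n m : Type*} [Fintype m] (A : Matrix n n ℂ) (B : Matrix m m ℂ) :
    ptrace2 (A ⊗ₖ B) = B.trace • A := by
  ext i j
  simp [ptrace2, trace, ← Finset.mul_sum, mul_comm]

lemma ptrace1_kronecker {n m : Type*} [Fintype n] (A : Matrix n n ℂ) (B : Matrix m m ℂ) :
    ptrace1 (A ⊗ₖ B) = A.trace • B := by
  ext i j
  simp [ptrace1, trace, ← Finset.sum_mul]

section Entropy

variable {n m : Type*} [Fintype n] [DecidableEq n] [Fintype m] [DecidableEq m]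

lemma Matrix.IsHermitian.sum_comp_eigenvalues_eq_of_charpoly_eq {A : Matrix n n ℂ}
    (hA : A.IsHermitian) {v : n → ℝ} (hv : A.charpoly = ∏ i, (X - C (v i : ℂ))) (g : ℝ → ℝ) :
    ∑ i, g (hA.eigenvalues i) = ∑ i, g (v i) := by
  have hroots : (Finset.univ.val.map fun i => (hA.eigenvalues i : ℂ)) =
      Finset.univ.val.map fun i => (v i : ℂ) := by
    have h := hA.roots_charpoly_eq_eigenvalues
    rw [hv, roots_prod _ _ (by simp [Finset.prod_ne_zero_iff, X_sub_C_ne_zero])] at h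
    simp only [roots_X_sub_C, Multiset.bind_singleton, Complex.coe_algebraMap,
      Function.comp_apply] at h
    exact h.symm
  have h2 := congrArg (fun s : Multiset ℂ => (s.map (g ∘ Complex.re)).sum) hroots
  simp only [Multiset.map_map, Function.comp_def, Complex.ofReal_re] at h2
  exact h2

lemma vnEntropy_eq_sum_negMulLog {A : Matrix n n ℂ} (hA : A.IsHermitian) :
    vnEntropy A = ∑ i, negMulLog (hA.eigenvalues i) / log 2 := by
  simp only [vnEntropy, dif_pos hA, logb, negMulLog, ← Finset.sum_neg_distrib]
  exact Finset.sum_congr rfl fun i _ => by ring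

lemma vnEntropy_unitary_mul_diagonal_mul_star {U : Matrix n n ℂ} (hU : U ∈ unitaryGroup n ℂ)
    (v : n → ℝ) :
    vnEntropy (U * diagonal (fun i => (v i : ℂ)) * star U) = ∑ i, negMulLog (v i) / log 2 := by
  have hA : (U * diagonal (fun i => (v i : ℂ)) * star U).IsHermitian := by
    rw [star_eq_conjTranspose]
    exact isHermitian_mul_mul_conjTranspose _ (isHermitian_diagonal_of_self_adjoint _
      (funext fun i => Complex.conj_ofReal _))
  have hchar : (U * diagonal (fun i => (v i : ℂ)) * star U).charpoly =
      ∏ i, (X - C (v i : ℂ)) := by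
    rw [charpoly_mul_comm, ← mul_assoc, (mem_unitaryGroup_iff').mp hU, one_mul,
      charpoly_diagonal]
  rw [vnEntropy_eq_sum_negMulLog hA]
  exact hA.sum_comp_eigenvalues_eq_of_charpoly_eq hchar (negMulLog · / log 2)

lemma Matrix.IsHermitian.sum_eigenvalues_eq_one {A : Matrix n n ℂ} (hA : A.IsHermitian)
    (h : A.trace = 1) : ∑ i, hA.eigenvalues i = 1 := by
  apply Complex.ofReal_injective
  push_cast
  rw [← h, hA.trace_eq_sum_eigenvalues]
  rfl

lemma vnEntropy_kronecker {A : Matrix n n ℂ} {B : Matrix m m ℂ} (hA : A.IsHermitian)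
    (hB : B.IsHermitian) (hAtr : A.trace = 1) (hBtr : B.trace = 1) :
    vnEntropy (A ⊗ₖ B) = vnEntropy A + vnEntropy B := by
  set U := hA.eigenvectorUnitary
  set V := hB.eigenvectorUnitary
  have hAB : A ⊗ₖ B = (U.1 ⊗ₖ V.1) *
      diagonal (fun q : n × m => ((hA.eigenvalues q.1 * hB.eigenvalues q.2 : ℝ) : ℂ)) *
      star (U.1 ⊗ₖ V.1) := by
    conv_lhs => rw [hA.spectral_theorem, hB.spectral_theorem]
    rw [Unitary.conjStarAlgAut_apply, Unitary.conjStarAlgAut_apply, mul_kronecker_mul,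
      mul_kronecker_mul, diagonal_kronecker_diagonal, star_eq_conjTranspose,
      star_eq_conjTranspose, star_eq_conjTranspose, conjTranspose_kronecker]
    push_cast
    rfl
  have hUV : U.1 ⊗ₖ V.1 ∈ unitaryGroup (n × m) ℂ := kronecker_mem_unitary U.2 V.2
  rw [hAB, vnEntropy_unitary_mul_diagonal_mul_star hUV, vnEntropy_eq_sum_negMulLog hA,
    vnEntropy_eq_sum_negMulLog hB, Fintype.sum_prod_type]
  simp only [negMulLog_mul, add_div, Finset.sum_add_distrib, mul_div_assoc, ← Finset.mul_sum,
    ← Finset.sum_mul, hA.sum_eigenvalues_eq_one hAtr, hB.sum_eigenvalues_eq_one hBtr, one_mul]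

lemma mutInfo_kronecker_eq_zero {A : Matrix n n ℂ} {B : Matrix m m ℂ} (hA : A.IsHermitian)
    (hB : B.IsHermitian) (hAtr : A.trace = 1) (hBtr : B.trace = 1) :
    mutInfo (A ⊗ₖ B) = 0 := by
  rw [mutInfo, ptrace2_kronecker, ptrace1_kronecker, vnEntropy_kronecker hA hB hAtr hBtr, hAtr,
    hBtr, one_smul, one_smul, sub_self]

end Entropy

lemma isHermitian_sum_smul_of_isState {ι R : Type*} [Fintype ι] [Fintype R] (c : ι → ℝ)
    {ρ : ι → Matrix R R ℂ} (hρ : ∀ i, IsState (ρ i)) : (∑ i, c i • ρ i).IsHermitian :=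
  isSelfAdjoint_sum _ fun i _ => (hρ i).1.isHermitian.smul (IsSelfAdjoint.all (c i))

lemma trace_sum_smul_of_isState {ι R : Type*} [Fintype ι] [Fintype R] (c : ι → ℝ)
    {ρ : ι → Matrix R R ℂ} (hρ : ∀ i, IsState (ρ i)) : (∑ i, c i • ρ i).trace = ∑ i, c i := by
  simp [trace_sum, (hρ _).2]

section Marginals

variable {ι R B E : Type*} [Fintype ι]

lemma mRB_sum_smul_kronecker [Fintype E] (c : ι → ℝ) (A : ι → Matrix R R ℂ)
    (N : ι → Matrix (B × E) (B × E) ℂ) :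
    mRB (∑ i, c i • (A i ⊗ₖ N i)) = ∑ i, c i • (A i ⊗ₖ ptrace2 (N i)) := by
  ext x y
  simp only [mRB, ptrace2, of_apply, Matrix.sum_apply, Matrix.smul_apply,
    kroneckerMap_apply, Finset.mul_sum, Finset.smul_sum]
  exact Finset.sum_comm

lemma mRE_sum_smul_kronecker [Fintype B] (c : ι → ℝ) (A : ι → Matrix R R ℂ)
    (N : ι → Matrix (B × E) (B × E) ℂ) :
    mRE (∑ i, c i • (A i ⊗ₖ N i)) = ∑ i, c i • (A i ⊗ₖ ptrace1 (N i)) := by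
  ext x y
  simp only [mRE, ptrace1, of_apply, Matrix.sum_apply, Matrix.smul_apply,
    kroneckerMap_apply, Finset.mul_sum, Finset.smul_sum]
  exact Finset.sum_comm

lemma ptrace1_vecMulVec_eq_ptrace2 [Fintype B] {w : B × B → ℂ}
    (hw : ∀ a b, w (a, b) = w (b, a)) :
    ptrace1 (vecMulVec w (star w)) = ptrace2 (vecMulVec w (star w)) := by
  ext i j
  simp [ptrace1, ptrace2, vecMulVec_apply, hw]

lemma one_kronecker_mul_sum_mul_one_kronecker [Fintype R] [DecidableEq R] {A : Type*}
    [Fintype A] (M : Matrix B A ℂ) (c : ι → ℝ) (ρ : ι → Matrix R R ℂ) (f : ι → A → ℂ) :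
    ((1 : Matrix R R ℂ) ⊗ₖ M) * (∑ i, c i • (ρ i ⊗ₖ vecMulVec (f i) (star (f i)))) *
        ((1 : Matrix R R ℂ) ⊗ₖ M)ᴴ =
      ∑ i, c i • (ρ i ⊗ₖ vecMulVec (M *ᵥ f i) (star (M *ᵥ f i))) := by
  rw [Matrix.mul_sum, Matrix.sum_mul]
  refine Finset.sum_congr rfl fun i _ => ?_
  rw [Matrix.mul_smul, Matrix.smul_mul, conjTranspose_kronecker, ← mul_kronecker_mul,
    ← mul_kronecker_mul, conjTranspose_one, one_mul, mul_one, mul_vecMulVec, vecMulVec_mul,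
    star_mulVec]

lemma sum_smul_kronecker (c : ι → ℝ) (A : ι → Matrix R R ℂ) (N : Matrix B B ℂ) :
    ∑ i, c i • (A i ⊗ₖ N) = (∑ i, c i • A i) ⊗ₖ N := by
  ext x y
  simp [Matrix.sum_apply, Finset.sum_mul, mul_assoc]

end Marginals

section CopyIsometry

variable {n : Type*} [Fintype n] {e : n → n → ℂ}

-- The paper's `M_A = ∑ᵢ |eⁱ⟩_B ⟨eⁱ|_A ⊗ |eⁱ⟩_E`.
def copyIsometry (e : n → n → ℂ) : Matrix (n × n) n ℂ :=
  of fun x a => ∑ i, e i x.1 * e i x.2 * star (e i a)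

lemma sum_mul_star_eq_ite [DecidableEq n]
    (he : ∀ i j, ∑ k, star (e i k) * e j k = if i = j then 1 else 0) (i j : n) :
    ∑ k, e i k * star (e j k) = if i = j then 1 else 0 := by
  simp_rw [mul_comm (e i _), he j i, eq_comm]

lemma orthonormal_columns_of_orthonormal_rows [DecidableEq n]
    (he : ∀ i j, ∑ k, star (e i k) * e j k = if i = j then 1 else 0) (a b : n) :
    ∑ i, star (e i a) * e i b = if a = b then 1 else 0 := by
  have hE : of e * (of e)ᴴ = 1 := by
    ext i j
    simpa [mul_apply, one_apply] using sum_mul_star_eq_ite he i j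
  have hE' : (of e)ᴴ * of e = 1 := mul_eq_one_comm.mp hE
  simpa [mul_apply, one_apply] using congrFun (congrFun hE' a) b

lemma copyIsometry_conjTranspose_mul_self [DecidableEq n]
    (he : ∀ i j, ∑ k, star (e i k) * e j k = if i = j then 1 else 0) :
    (copyIsometry e)ᴴ * copyIsometry e = 1 := by
  ext a b
  have hw : ∀ i j, ∑ x : n × n, star (e i x.1 * e i x.2) * (e j x.1 * e j x.2) =
      if i = j then 1 else 0 := by
    intro i j
    simp only [Fintype.sum_prod_type, star_mul', mul_mul_mul_comm, ← Finset.mul_sum,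
      ← Finset.sum_mul, he]
    split_ifs <;> simp
  calc ((copyIsometry e)ᴴ * copyIsometry e) a b
      = ∑ i, ∑ j, e i a * star (e j b) *
          ∑ x : n × n, star (e i x.1 * e i x.2) * (e j x.1 * e j x.2) := by
        simp only [mul_apply, conjTranspose_apply, copyIsometry, of_apply, star_sum, star_mul',
          star_star, Finset.sum_mul, Finset.mul_sum]
        rw [Finset.sum_sum_sum_reverse]
        exact Finset.sum_congr rfl fun i _ => Finset.sum_congr rfl fun j _ =>
          Finset.sum_congr rfl fun x _ => by ring
    _ = (1 : Matrix n n ℂ) a b := by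
        simp only [hw, mul_ite, mul_one, mul_zero, Finset.sum_ite_eq, Finset.mem_univ, if_true]
        simp_rw [one_apply, mul_comm (e _ a), orthonormal_columns_of_orthonormal_rows he b a,
          eq_comm]

lemma copyIsometry_mulVec (e : n → n → ℂ) (f : n → ℂ) :
    copyIsometry e *ᵥ f = fun x => ∑ j, e j x.1 * e j x.2 * ∑ a, star (e j a) * f a := by
  ext x
  simp [mulVec, dotProduct, copyIsometry, Finset.sum_mul, Finset.mul_sum, mul_assoc]
  exact Finset.sum_comm

lemma ptrace2_vecMulVec_sum_tensor_self [DecidableEq n]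
    (he : ∀ i j, ∑ k, star (e i k) * e j k = if i = j then 1 else 0) {γ : n → ℂ} {t : ℝ}
    (hγ : ∀ j, Complex.normSq (γ j) = t) :
    ptrace2 (vecMulVec (fun x => ∑ j, e j x.1 * e j x.2 * γ j)
      (star fun x => ∑ j, e j x.1 * e j x.2 * γ j)) = (t : ℂ) • 1 := by
  ext b b'
  calc ptrace2 (vecMulVec (fun x => ∑ j, e j x.1 * e j x.2 * γ j)
        (star fun x => ∑ j, e j x.1 * e j x.2 * γ j)) b b'
      = ∑ j, ∑ k, e j b * γ j * star (e k b') * star (γ k) * ∑ m, e j m * star (e k m) := by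
        simp only [ptrace2, of_apply, vecMulVec_apply, Pi.star_apply, star_sum, star_mul',
          Finset.sum_mul, Finset.mul_sum]
        rw [Finset.sum_sum_sum_reverse]
        exact Finset.sum_congr rfl fun i _ => Finset.sum_congr rfl fun j _ =>
          Finset.sum_congr rfl fun x _ => by ring
    _ = ∑ j, e j b * star (e j b') * (γ j * star (γ j)) := by
        simp only [sum_mul_star_eq_ite he, mul_ite, mul_one, mul_zero, Finset.sum_ite_eq,
          Finset.mem_univ, if_true]
        exact Finset.sum_congr rfl fun j _ => by ring
    _ = ((t : ℂ) • (1 : Matrix n n ℂ)) b b' := by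
        have hγ' : ∀ j, γ j * star (γ j) = t := fun j => by
          rw [← hγ j]; exact Complex.mul_conj (γ j)
        simp_rw [hγ', ← Finset.sum_mul, mul_comm (e _ b),
          orthonormal_columns_of_orthonormal_rows he b' b, Matrix.smul_apply, one_apply, eq_comm]
        simp only [ite_mul, one_mul, zero_mul, smul_eq_mul, mul_ite, mul_one, mul_zero]

end CopyIsometry

theorem classically_correlated_states_perfectly_eliminable_general
    {dR : Type*} [Fintype dR] [DecidableEq dR] (d : ℕ) (hd : 0 < d)
    (p : Fin d → ℝ) (hp1 : ∑ i, p i = 1)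
    (ρi : Fin d → Matrix dR dR ℂ) (hρi : ∀ i, IsState (ρi i))
    (f : Fin d → Fin d → ℂ)
    (e : Fin d → Fin d → ℂ)
    (he : ∀ i j, ∑ k, star (e i k) * e j k = if i = j then 1 else 0)
    (hmub : ∀ i j, Complex.normSq (∑ k, star (e i k) * f j k) = (d : ℝ)⁻¹)
    (ρRA : Matrix (dR × Fin d) (dR × Fin d) ℂ)
    (hρRA : ρRA = ∑ i, (p i : ℝ) • ((ρi i) ⊗ₖ Matrix.vecMulVec (f i) (star (f i))))
    (M : Matrix (Fin d × Fin d) (Fin d) ℂ)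
    (hM : M = Matrix.of fun x a => ∑ i, e i x.1 * e i x.2 * star (e i a))
    (ς : Matrix (dR × (Fin d × Fin d)) (dR × (Fin d × Fin d)) ℂ)
    (hς : ς = (((1 : Matrix dR dR ℂ) ⊗ₖ M) * ρRA * ((1 : Matrix dR dR ℂ) ⊗ₖ M)ᴴ)) :
    Mᴴ * M = 1 ∧
    mRB ς = (∑ i, (p i : ℝ) • ρi i) ⊗ₖ (((d : ℂ))⁻¹ • (1 : Matrix (Fin d) (Fin d) ℂ)) ∧
    mRE ς = (∑ i, (p i : ℝ) • ρi i) ⊗ₖ (((d : ℂ))⁻¹ • (1 : Matrix (Fin d) (Fin d) ℂ)) ∧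
    mutInfo (mRB ς) = 0 ∧ mutInfo (mRE ς) = 0 := by
  replace hM : M = copyIsometry e := hM
  have hB : ∀ i, ptrace2 (vecMulVec (M *ᵥ f i) (star (M *ᵥ f i))) =
      (d : ℂ)⁻¹ • (1 : Matrix (Fin d) (Fin d) ℂ) := fun i => by
    rw [hM, copyIsometry_mulVec, ptrace2_vecMulVec_sum_tensor_self he fun j => hmub j i]
    push_cast; rfl
  have hE : ∀ i, ptrace1 (vecMulVec (M *ᵥ f i) (star (M *ᵥ f i))) =
      (d : ℂ)⁻¹ • (1 : Matrix (Fin d) (Fin d) ℂ) := fun i => by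
    rw [ptrace1_vecMulVec_eq_ptrace2 fun a b => by simp [hM, copyIsometry_mulVec, mul_comm], hB]
  rw [hρRA, one_kronecker_mul_sum_mul_one_kronecker] at hς
  have hRB : mRB ς = (∑ i, p i • ρi i) ⊗ₖ ((d : ℂ)⁻¹ • (1 : Matrix (Fin d) (Fin d) ℂ)) := by
    simp_rw [hς, mRB_sum_smul_kronecker, hB, sum_smul_kronecker]
  have hRE : mRE ς = (∑ i, p i • ρi i) ⊗ₖ ((d : ℂ)⁻¹ • (1 : Matrix (Fin d) (Fin d) ℂ)) := by
    simp_rw [hς, mRE_sum_smul_kronecker, hE, sum_smul_kronecker]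
  have hρR := isHermitian_sum_smul_of_isState p hρi
  have hρRtr : (∑ i, p i • ρi i).trace = 1 := by
    rw [trace_sum_smul_of_isState p hρi, hp1, Complex.ofReal_one]
  have hmix : ((d : ℂ)⁻¹ • (1 : Matrix (Fin d) (Fin d) ℂ)).IsHermitian :=
    isHermitian_one.smul (by simp [IsSelfAdjoint])
  have hmixtr : ((d : ℂ)⁻¹ • (1 : Matrix (Fin d) (Fin d) ℂ)).trace = 1 := by
    simp [trace_smul, hd.ne']
  refine ⟨hM ▸ copyIsometry_conjTranspose_mul_self he, hRB, hRE, ?_, ?_⟩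
  · rw [hRB, mutInfo_kronecker_eq_zero hρR hmix hρRtr hmixtr]
  · rw [hRE, mutInfo_kronecker_eq_zero hρR hmix hρRtr hmixtr]

/-- For a classically correlated state
`ρ_{RA} = ∑ᵢ pᵢ ρ_R^i ⊗ |i⟩⟨i|_A`, the isometry `M_A = ∑ᵢ |e_B^i⟩⟨e_A^i| ⊗ |e_E^i⟩`
built from a mutually unbiased orthonormal basis `{|eⁱ⟩}` perfectly eliminates the
correlations: `ς_{RB} = ρ_R ⊗ 1_B/d` and `ς_{RE} = ρ_R ⊗ 1_E/d`, so that
`I^{R:B}(ς) = I^{R:E}(ς) = 0`. -/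
theorem classically_correlated_states_perfectly_eliminable
    {dR : Type*} [Fintype dR] [DecidableEq dR] (d : ℕ) (hd : 0 < d)
    (p : Fin d → ℝ) (hp0 : ∀ i, 0 ≤ p i) (hp1 : ∑ i, p i = 1)
    (ρi : Fin d → Matrix dR dR ℂ) (hρi : ∀ i, IsState (ρi i))
    (f : Fin d → Fin d → ℂ)
    (hf : ∀ i j, ∑ k, star (f i k) * f j k = if i = j then 1 else 0)
    (e : Fin d → Fin d → ℂ)
    (he : ∀ i j, ∑ k, star (e i k) * e j k = if i = j then 1 else 0)
    (hmub : ∀ i j, Complex.normSq (∑ k, star (e i k) * f j k) = (d : ℝ)⁻¹)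
    (ρRA : Matrix (dR × Fin d) (dR × Fin d) ℂ)
    (hρRA : ρRA = ∑ i, (p i : ℝ) • ((ρi i) ⊗ₖ Matrix.vecMulVec (f i) (star (f i))))
    (M : Matrix (Fin d × Fin d) (Fin d) ℂ)
    (hM : M = Matrix.of fun x a => ∑ i, e i x.1 * e i x.2 * star (e i a))
    (ς : Matrix (dR × (Fin d × Fin d)) (dR × (Fin d × Fin d)) ℂ)
    (hς : ς = (((1 : Matrix dR dR ℂ) ⊗ₖ M) * ρRA * ((1 : Matrix dR dR ℂ) ⊗ₖ M)ᴴ)) :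
    Mᴴ * M = 1 ∧
    mRB ς = (∑ i, (p i : ℝ) • ρi i) ⊗ₖ (((d : ℂ))⁻¹ • (1 : Matrix (Fin d) (Fin d) ℂ)) ∧
    mRE ς = (∑ i, (p i : ℝ) • ρi i) ⊗ₖ (((d : ℂ))⁻¹ • (1 : Matrix (Fin d) (Fin d) ℂ)) ∧
    mutInfo (mRB ς) = 0 ∧ mutInfo (mRE ς) = 0 :=
  classically_correlated_states_perfectly_eliminable_general d hd p hp1 ρi hρi f e he hmub ρRA hρRA
    M hM ς hς
end

section
/- Let {|φ^m_A⟩}_m be vectors in H_A forming a rank-one POVM, i.e. ∑_m |φ^m_A⟩⟨φ^m_A| = 1_A, and let {|m_B⟩}_m, {|m_E⟩}_m be orthonormal families in H_B and H_E respectively. Then V_P := ∑_m (|m_B⟩⊗|m_E⟩)⟨φ^m_A| is an isometry from H_A to H_B⊗H_E, and for every bipartite state ρ_{RA}, the output state ς_{RBE} := (1_R⊗V_P) ρ_{RA} (1_R⊗V_P†) satisfies I^{R:B}(ς_{RBE}) = I^{R:E}(ς_{RBE}). -/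
open Matrix BigOperators
open scoped Kronecker ComplexOrder

/-! Write `V = N Φ†`, where `Φ† : a ↦ (⟨φᵐ|a⟩)ₘ` is an isometry because the `φᵐ` form a
rank-one POVM, and `N : |m⟩ ↦ |m_B⟩|m_E⟩`. Then `ς = (1 ⊗ N) Q (1 ⊗ N)†` with
`Q = (1 ⊗ Φ†) ρ (1 ⊗ Φ)`. Tracing out `E` (resp. `B`) kills the blocks of `Q` that are
off-diagonal in `m`, so `ς_RB` and `ς_RE` are the images of the same dephased state `Q̄` under
the local isometries `|m⟩ ↦ |m_B⟩` and `|m⟩ ↦ |m_E⟩`. An isometric conjugation only adds zeros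
to the spectrum, so it preserves von Neumann entropies, and both mutual informations equal
`I^{R:M}(Q̄)`. -/

section Entropy

open Polynomial

variable {m n : Type*} [Fintype m] [DecidableEq m] [Fintype n] [DecidableEq n]

lemma vnEntropy_eq_roots_charpoly {A : Matrix n n ℂ} (hA : A.IsHermitian) :
    vnEntropy A = -(A.charpoly.roots.map fun z : ℂ => z.re * Real.logb 2 z.re).sum := by
  rw [vnEntropy, dif_pos hA, hA.roots_charpoly_eq_eigenvalues, Multiset.map_map]
  simp [Function.comp_def]

lemma vnEntropy_isometry_conj (K : Matrix m n ℂ) (hK : Kᴴ * K = 1) {A : Matrix n n ℂ}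
    (hA : A.IsHermitian) : vnEntropy (K * A * Kᴴ) = vnEntropy A := by
  have hchar : X ^ Fintype.card n * (K * A * Kᴴ).charpoly = X ^ Fintype.card m * A.charpoly := by
    rw [Matrix.mul_assoc, charpoly_mul_comm', Matrix.mul_assoc, hK, Matrix.mul_one]
  have hroots := congrArg roots hchar
  rw [roots_mul (mul_ne_zero (pow_ne_zero _ X_ne_zero) (charpoly_monic _).ne_zero),
    roots_mul (mul_ne_zero (pow_ne_zero _ X_ne_zero) (charpoly_monic _).ne_zero),
    roots_X_pow, roots_X_pow] at hroots
  have hsum := congrArg (fun s => (s.map fun z : ℂ => z.re * Real.logb 2 z.re).sum) hroots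
  simp only [Multiset.map_add, Multiset.sum_add, Multiset.map_nsmul, Multiset.sum_nsmul,
    Multiset.map_singleton, Multiset.sum_singleton, Complex.zero_re, zero_mul, smul_zero,
    zero_add] at hsum
  rw [vnEntropy_eq_roots_charpoly (isHermitian_mul_mul_conjTranspose K hA),
    vnEntropy_eq_roots_charpoly hA, hsum]

end Entropy

lemma Matrix.IsHermitian.ptrace1 {R I : Type*} [Fintype R] {Q : Matrix (R × I) (R × I) ℂ}
    (hQ : Q.IsHermitian) : (ptrace1 Q).IsHermitian := by
  ext i j
  simp only [conjTranspose_apply, _root_.ptrace1, of_apply, star_sum]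
  exact Finset.sum_congr rfl fun k _ => congrFun (congrFun hQ (k, i)) (k, j)

lemma Matrix.sum_mul_star_of_isometry {B I : Type*} [Fintype B] [DecidableEq I] {W : Matrix B I ℂ}
    (hW : Wᴴ * W = 1) (m m' : I) : ∑ b, W b m * star (W b m') = if m' = m then 1 else 0 := by
  simpa [mul_apply, one_apply, mul_comm] using congrFun (congrFun hW m') m

section Kronecker

variable {R I B : Type*} [Fintype R] [DecidableEq R]

lemma one_kronecker_isometry [Fintype B] [DecidableEq I] {W : Matrix B I ℂ} (hW : Wᴴ * W = 1) :
    ((1 : Matrix R R ℂ) ⊗ₖ W)ᴴ * ((1 : Matrix R R ℂ) ⊗ₖ W) = 1 := by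
  rw [conjTranspose_kronecker, conjTranspose_one, ← mul_kronecker_mul, hW, Matrix.one_mul,
    one_kronecker_one]

lemma one_kronecker_conj_apply [Fintype I] (W : Matrix B I ℂ) (Q : Matrix (R × I) (R × I) ℂ)
    (r r' : R) (b b' : B) :
    (((1 : Matrix R R ℂ) ⊗ₖ W) * Q * ((1 : Matrix R R ℂ) ⊗ₖ W)ᴴ) (r, b) (r', b') =
      ∑ m, ∑ m', W b m * Q (r, m) (r', m') * star (W b' m') := by
  simp only [mul_apply, kroneckerMap_apply, one_apply, ite_mul, one_mul, zero_mul,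
    Fintype.sum_prod_type, Finset.sum_ite_irrel, Finset.sum_const_zero, Finset.sum_ite_eq,
    Finset.mem_univ, ↓reduceIte, conjTranspose_apply, apply_ite star, RCLike.star_def, star_zero,
    mul_ite, Finset.sum_mul, mul_assoc, mul_zero]
  rw [Finset.sum_comm]

lemma ptrace1_one_kronecker_conj [Fintype B] [Fintype I] (W : Matrix B I ℂ)
    (Q : Matrix (R × I) (R × I) ℂ) :
    ptrace1 (((1 : Matrix R R ℂ) ⊗ₖ W) * Q * ((1 : Matrix R R ℂ) ⊗ₖ W)ᴴ) =
      W * ptrace1 Q * Wᴴ := by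
  ext b b'
  simp only [ptrace1, of_apply, one_kronecker_conj_apply]
  simp only [mul_apply, conjTranspose_apply, of_apply, Finset.mul_sum, Finset.sum_mul]
  rw [Finset.sum_comm]
  conv_rhs => rw [Finset.sum_comm]
  exact Finset.sum_congr rfl fun _ _ => Finset.sum_comm

lemma ptrace2_one_kronecker_conj [Fintype B] [Fintype I] [DecidableEq I] {W : Matrix B I ℂ}
    (hW : Wᴴ * W = 1) (Q : Matrix (R × I) (R × I) ℂ) :
    ptrace2 (((1 : Matrix R R ℂ) ⊗ₖ W) * Q * ((1 : Matrix R R ℂ) ⊗ₖ W)ᴴ) = ptrace2 Q := by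
  ext r r'
  simp only [ptrace2, of_apply, one_kronecker_conj_apply]
  rw [Finset.sum_comm]
  refine Finset.sum_congr rfl fun m _ => ?_
  rw [Finset.sum_comm]
  simp only [mul_right_comm _ (Q _ _), ← Finset.sum_mul, sum_mul_star_of_isometry hW, ite_mul,
    one_mul, zero_mul, Finset.sum_ite_eq', Finset.mem_univ, if_true]

lemma mutInfo_one_kronecker_conj [Fintype B] [DecidableEq B] [Fintype I] [DecidableEq I]
    {W : Matrix B I ℂ} (hW : Wᴴ * W = 1) {Q : Matrix (R × I) (R × I) ℂ} (hQ : Q.IsHermitian) :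
    mutInfo (((1 : Matrix R R ℂ) ⊗ₖ W) * Q * ((1 : Matrix R R ℂ) ⊗ₖ W)ᴴ) = mutInfo Q := by
  rw [mutInfo, mutInfo, ptrace2_one_kronecker_conj hW, ptrace1_one_kronecker_conj,
    vnEntropy_isometry_conj W hW hQ.ptrace1,
    vnEntropy_isometry_conj _ (one_kronecker_isometry hW) hQ]

end Kronecker

def khatriRao {α B E I : Type*} [Mul α] (W : Matrix B I α) (U : Matrix E I α) :
    Matrix (B × E) I α :=
  of fun x m => W x.1 m * U x.2 m

lemma conjTranspose_khatriRao_mul_khatriRao {B E I : Type*} [Fintype B] [Fintype E]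
    (W W' : Matrix B I ℂ) (U U' : Matrix E I ℂ) :
    (khatriRao W U)ᴴ * khatriRao W' U' = (Wᴴ * W') ⊙ (Uᴴ * U') := by
  ext m m'
  simp only [mul_apply, conjTranspose_apply, khatriRao, of_apply, hadamard_apply,
    Fintype.sum_prod_type, Finset.sum_mul_sum, star_mul']
  exact Finset.sum_congr rfl fun _ _ => Finset.sum_congr rfl fun _ _ => by ring

lemma khatriRao_isometry {B E I : Type*} [Fintype B] [Fintype E] [DecidableEq I]
    {W : Matrix B I ℂ} {U : Matrix E I ℂ} (hW : Wᴴ * W = 1) (hU : Uᴴ * U = 1) :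
    (khatriRao W U)ᴴ * khatriRao W U = 1 := by
  rw [conjTranspose_khatriRao_mul_khatriRao, hW, hU, hadamard_one, diag_one]
  exact diagonal_one

def dephaseSnd {R I : Type*} [DecidableEq I] (Q : Matrix (R × I) (R × I) ℂ) :
    Matrix (R × I) (R × I) ℂ :=
  of fun x y => if x.2 = y.2 then Q x y else 0

lemma Matrix.IsHermitian.dephaseSnd {R I : Type*} [DecidableEq I] {Q : Matrix (R × I) (R × I) ℂ}
    (hQ : Q.IsHermitian) : (dephaseSnd Q).IsHermitian := by
  ext x y
  have hxy := congrFun (congrFun hQ x) y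
  rw [conjTranspose_apply] at hxy
  by_cases h : x.2 = y.2
  · simp [_root_.dephaseSnd, h, hxy]
  · simp [_root_.dephaseSnd, h, Ne.symm h]

section Marginals

variable {R I B E : Type*} [Fintype R] [DecidableEq R] [Fintype I] [DecidableEq I]

lemma mRB_one_kronecker_khatriRao_conj [Fintype E] (W : Matrix B I ℂ) {U : Matrix E I ℂ}
    (hU : Uᴴ * U = 1) (Q : Matrix (R × I) (R × I) ℂ) :
    mRB (((1 : Matrix R R ℂ) ⊗ₖ khatriRao W U) * Q * ((1 : Matrix R R ℂ) ⊗ₖ khatriRao W U)ᴴ) =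
      ((1 : Matrix R R ℂ) ⊗ₖ W) * dephaseSnd Q * ((1 : Matrix R R ℂ) ⊗ₖ W)ᴴ := by
  ext ⟨r, b⟩ ⟨r', b'⟩
  simp only [mRB, of_apply, one_kronecker_conj_apply, khatriRao, dephaseSnd]
  rw [Finset.sum_comm]
  refine Finset.sum_congr rfl fun m _ => ?_
  rw [Finset.sum_comm]
  refine Finset.sum_congr rfl fun m' _ => ?_
  have hfactor : ∑ e, W b m * U e m * Q (r, m) (r', m') * star (W b' m' * U e m') =
      (∑ e, U e m * star (U e m')) * (W b m * Q (r, m) (r', m') * star (W b' m')) := by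
    rw [Finset.sum_mul]
    exact Finset.sum_congr rfl fun _ _ => by rw [star_mul']; ring
  rw [hfactor, sum_mul_star_of_isometry hU]
  by_cases h : m = m' <;> simp [h, eq_comm]

lemma mRE_one_kronecker_khatriRao_conj [Fintype B] {W : Matrix B I ℂ} (hW : Wᴴ * W = 1)
    (U : Matrix E I ℂ) (Q : Matrix (R × I) (R × I) ℂ) :
    mRE (((1 : Matrix R R ℂ) ⊗ₖ khatriRao W U) * Q * ((1 : Matrix R R ℂ) ⊗ₖ khatriRao W U)ᴴ) =
      ((1 : Matrix R R ℂ) ⊗ₖ U) * dephaseSnd Q * ((1 : Matrix R R ℂ) ⊗ₖ U)ᴴ := by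
  ext ⟨r, e⟩ ⟨r', e'⟩
  simp only [mRE, of_apply, one_kronecker_conj_apply, khatriRao, dephaseSnd]
  rw [Finset.sum_comm]
  refine Finset.sum_congr rfl fun m _ => ?_
  rw [Finset.sum_comm]
  refine Finset.sum_congr rfl fun m' _ => ?_
  have hfactor : ∑ b, W b m * U e m * Q (r, m) (r', m') * star (W b m' * U e' m') =
      (∑ b, W b m * star (W b m')) * (U e m * Q (r, m) (r', m') * star (U e' m')) := by
    rw [Finset.sum_mul]
    exact Finset.sum_congr rfl fun _ _ => by rw [star_mul']; ring
  rw [hfactor, sum_mul_star_of_isometry hW]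
  by_cases h : m = m' <;> simp [h, eq_comm]

end Marginals

/-- If `{|φᵐ_A⟩}` is a rank-one POVM (`∑ₘ |φᵐ⟩⟨φᵐ| = 1_A`) and
`{|m_B⟩}`, `{|m_E⟩}` are orthonormal families, then `V_P = ∑ₘ (|m_B⟩ ⊗ |m_E⟩)⟨φᵐ_A|` is
an isometry and for every state `ρ_{RA}` the output `ς = (1_R ⊗ V_P) ρ (1_R ⊗ V_P)†`
satisfies `I^{R:B}(ς) = I^{R:E}(ς)`. -/
theorem rank_one_povm_isometry_balances_mutInfo
    {dR dA dB dE ι : Type*} [Fintype dR] [DecidableEq dR] [Fintype dA] [DecidableEq dA]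
    [Fintype dB] [DecidableEq dB] [Fintype dE] [DecidableEq dE] [Fintype ι] [DecidableEq ι]
    (φ : ι → dA → ℂ)
    (hφ : ∑ m, Matrix.vecMulVec (φ m) (star (φ m)) = (1 : Matrix dA dA ℂ))
    (mB : ι → dB → ℂ)
    (hmB : ∀ i j, ∑ k, star (mB i k) * mB j k = if i = j then 1 else 0)
    (mE : ι → dE → ℂ)
    (hmE : ∀ i j, ∑ k, star (mE i k) * mE j k = if i = j then 1 else 0)
    (V : Matrix (dB × dE) dA ℂ)
    (hV : V = Matrix.of fun x a => ∑ m, mB m x.1 * mE m x.2 * star (φ m a)) :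
    Vᴴ * V = 1 ∧
    ∀ ρ : Matrix (dR × dA) (dR × dA) ℂ, IsState ρ →
      mutInfo (mRB (((1 : Matrix dR dR ℂ) ⊗ₖ V) * ρ * ((1 : Matrix dR dR ℂ) ⊗ₖ V)ᴴ)) =
      mutInfo (mRE (((1 : Matrix dR dR ℂ) ⊗ₖ V) * ρ * ((1 : Matrix dR dR ℂ) ⊗ₖ V)ᴴ)) := by
  set Φ : Matrix dA ι ℂ := (of φ)ᵀ
  set N : Matrix (dB × dE) ι ℂ := khatriRao (of mB)ᵀ (of mE)ᵀ
  have hΦ : Φ * Φᴴ = 1 := by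
    ext a a'
    simpa [Φ, mul_apply, Matrix.sum_apply, vecMulVec_apply] using congrFun (congrFun hφ a) a'
  have hMB : ((of mB)ᵀ)ᴴ * (of mB)ᵀ = 1 := by
    ext i j
    simpa [mul_apply, one_apply] using hmB i j
  have hME : ((of mE)ᵀ)ᴴ * (of mE)ᵀ = 1 := by
    ext i j
    simpa [mul_apply, one_apply] using hmE i j
  have hVN : V = N * Φᴴ := by
    ext x a
    simp [hV, N, Φ, khatriRao, mul_apply]
  refine ⟨?_, fun ρ hρ => ?_⟩
  · rw [hVN, conjTranspose_mul, conjTranspose_conjTranspose, Matrix.mul_assoc,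
      ← Matrix.mul_assoc Nᴴ, khatriRao_isometry hMB hME, Matrix.one_mul, hΦ]
  · set Q := ((1 : Matrix dR dR ℂ) ⊗ₖ Φᴴ) * ρ * ((1 : Matrix dR dR ℂ) ⊗ₖ Φᴴ)ᴴ
    have hς : ((1 : Matrix dR dR ℂ) ⊗ₖ V) * ρ * ((1 : Matrix dR dR ℂ) ⊗ₖ V)ᴴ =
        ((1 : Matrix dR dR ℂ) ⊗ₖ N) * Q * ((1 : Matrix dR dR ℂ) ⊗ₖ N)ᴴ := by
      rw [hVN, ← Matrix.one_mul (1 : Matrix dR dR ℂ), mul_kronecker_mul, conjTranspose_mul]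
      simp only [Q, Matrix.mul_assoc, Matrix.one_mul]
    have hQ : (dephaseSnd Q).IsHermitian :=
      (isHermitian_mul_mul_conjTranspose _ hρ.1.isHermitian).dephaseSnd
    rw [hς, mRB_one_kronecker_khatriRao_conj _ hME, mRE_one_kronecker_khatriRao_conj hMB,
      mutInfo_one_kronecker_conj hMB hQ, mutInfo_one_kronecker_conj hME hQ]
end
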